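/- The smallest period of any periodic bi-infinite sequence in X_k (the sequential period T_seq) equals 1 for k = 1, and equals 2^{j+1} for k ≥ 2 where j ≥ 0 is the unique integer with 2^j + 1 ≤ k ≤ 2^{j+1}. -/

import Mathlib

/-- The sliding-block map ψ on binary words: ψ(u₁…uₙ) = u*₁…u*ₙ₋₁ with u*ᵢ = uᵢ + uᵢ₊₁ (mod 2). -/
def psiW : List (ZMod 2) → List (ZMod 2)
  | a :: b :: rest => (a + b) :: psiW (b :: rest)
  | _ => []

/-- The forbidden sets: F 1 = {0}, F (k+1) = ψ⁻¹(F k). -/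
def F : ℕ → Set (List (ZMod 2))
  | 0 => ∅
  | 1 => {[(0 : ZMod 2)]}
  | (k + 1) => psiW ⁻¹' F k

/-- ψ on bi-infinite binary sequences. -/
def psiZ (x : ℤ → ZMod 2) : ℤ → ZMod 2 := fun i => x i + x (i + 1)

/-- Length-`k` subword of `x` starting at index `i`. -/
def subword (x : ℤ → ZMod 2) (i : ℤ) (k : ℕ) : List (ZMod 2) :=
  (List.range k).map fun t => x (i + t)

/-- Membership in the PFT X_k: for some shift r ∈ {0,1}, no subword of σʳ(x) starting at an
even index belongs to F k. -/
def inX (k : ℕ) (x : ℤ → ZMod 2) : Prop :=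
  ∃ r : ℕ, r < 2 ∧ ∀ i : ℤ, Even i → subword x (i + r) k ∉ F k

/-- The set of (positive) periods of periodic bi-infinite sequences in X_k. -/
def periodSet (k : ℕ) : Set ℕ :=
  {p | 0 < p ∧ ∃ x : ℤ → ZMod 2, inX k x ∧ ∀ i : ℤ, x (i + p) = x i}

/-! Unwinding `F`, a word of length `k + 1` is forbidden exactly when `ψ^k` sends it to `0`, so
`x ∈ X_{k+1}` says that `ψ^k x` equals `1` on a coset of `2ℤ`. Over `ZMod 2`,
`ψ^(2^a) x i = x i + x (i + 2^a)` and `ψ^(2^a - 1) x i` is the sum of `x` over a window of length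
`2^a`. Hence `ψ^(2^a - 1)` sends the Dirac comb of period `2^a` to the constant `1`, which yields a
point of period `2^a` in `X_k` whenever `k ≤ 2^a`. Conversely, if `2^j < k` and `x ∈ X_k` has period
`q`, then `u = ψ^(k - 1 - 2^j) x`, suitably shifted, satisfies `u (i + 2^j) = u i + 1` at even `i`. If
`2^(j+1) ∤ q`, some odd multiple of `2^j` is a multiple of `q`, and walking along it flips `u`. -/

open Function Finset

lemma subword_eq_map (x : ℤ → ZMod 2) (i : ℤ) (k : ℕ) :
    subword x i k = (List.range k).map fun t : ℕ => x (i + t) := by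
  have h : (List.range k).flatMap (fun t : ℕ => [(t : ℤ)]) = (List.range k).map (↑) :=
    List.flatMap_pure_eq_map _ _
  exact (congrArg (List.map _) h).trans (List.map_map ..)

lemma subword_succ (x : ℤ → ZMod 2) (i : ℤ) (k : ℕ) :
    subword x i (k + 1) = x i :: subword x (i + 1) k := by
  simp only [subword_eq_map, List.range_succ_eq_map, List.map_cons, List.map_map]
  simp [add_comm, add_left_comm]

lemma psiW_subword (x : ℤ → ZMod 2) (i : ℤ) (k : ℕ) :
    psiW (subword x i (k + 1)) = subword (psiZ x) i k := by
  induction k generalizing i with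
  | zero => simp [subword, psiW]
  | succ k ih =>
    rw [subword_succ, subword_succ, psiW, ← subword_succ, ih, subword_succ]
    rfl

lemma subword_mem_F_iff (x : ℤ → ZMod 2) (i : ℤ) (k : ℕ) :
    subword x i (k + 1) ∈ F (k + 1) ↔ psiZ^[k] x i = 0 := by
  induction k generalizing x with
  | zero => simp [F, subword]
  | succ k ih =>
    change subword x i (k + 2) ∈ psiW ⁻¹' F (k + 1) ↔ _
    rw [Set.mem_preimage, psiW_subword, ih, iterate_succ_apply]

lemma zmod_two_ne_zero_iff {a : ZMod 2} : a ≠ 0 ↔ a = 1 := by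
  revert a; decide

lemma inX_succ_iff {k : ℕ} {x : ℤ → ZMod 2} :
    inX (k + 1) x ↔ ∃ r : ℕ, r < 2 ∧ ∀ i : ℤ, Even i → psiZ^[k] x (i + r) = 1 := by
  simp only [inX, subword_mem_F_iff, zmod_two_ne_zero_iff]

lemma periodic_iterate_psiZ {x : ℤ → ZMod 2} {c : ℤ} (h : Periodic x c) (m : ℕ) :
    Periodic (psiZ^[m] x) c := by
  induction m with
  | zero => exact h
  | succ m ih =>
    intro i
    simp only [iterate_succ_apply', psiZ, add_right_comm i c 1, ih i, ih (i + 1)]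

lemma iterate_psiZ_two_pow (a : ℕ) (x : ℤ → ZMod 2) (i : ℤ) :
    psiZ^[2 ^ a] x i = x i + x (i + 2 ^ a) := by
  induction a generalizing x i with
  | zero => simp [psiZ]
  | succ a ih =>
    rw [pow_succ, mul_two, iterate_add_apply, ih, ih, ih, add_assoc i, ← mul_two, ← pow_succ]
    linear_combination CharTwo.add_self_eq_zero (x (i + 2 ^ a))

lemma iterate_psiZ_two_pow_sub_one (a : ℕ) (x : ℤ → ZMod 2) (i : ℤ) :
    psiZ^[2 ^ a - 1] x i = ∑ t ∈ range (2 ^ a), x (i + t) := by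
  induction a generalizing x i with
  | zero => simp
  | succ a ih =>
    have h : 2 ^ (a + 1) - 1 = 2 ^ a + (2 ^ a - 1) := by
      have := a.one_le_two_pow; rw [pow_succ]; omega
    rw [h, iterate_add_apply, iterate_psiZ_two_pow, ih, ih, pow_succ, mul_two, sum_range_add]
    simp only [Nat.cast_add, Nat.cast_pow, Nat.cast_ofNat, add_assoc]

def diracComb (P : ℕ) : ℤ → ZMod 2 := fun i => if (P : ℤ) ∣ i then 1 else 0

lemma diracComb_periodic (P : ℕ) : Periodic (diracComb P) P := fun i => by
  simp only [diracComb, dvd_add_self_right]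

lemma sum_range_diracComb {P : ℕ} (hP : 0 < P) (i : ℤ) :
    ∑ t ∈ range P, diracComb P (i + t) = 1 := by
  have hP' : (0 : ℤ) < P := by exact_mod_cast hP
  obtain ⟨t₀, ht₀, hdvd⟩ : ∃ t₀ < P, (P : ℤ) ∣ i + t₀ := by
    have h0 := Int.emod_nonneg (-i) hP'.ne'
    have hlt := Int.emod_lt_of_pos (-i) hP'
    refine ⟨((-i) % P).toNat, by omega, ?_⟩
    rw [Int.toNat_of_nonneg h0, Int.dvd_iff_emod_eq_zero, Int.add_emod_emod]
    simp
  rw [sum_eq_single_of_mem t₀ (mem_range.2 ht₀)]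
  · simp [diracComb, hdvd]
  · intro t ht hne
    have : ¬ (P : ℤ) ∣ i + t := fun h => hne <| Nat.ModEq.eq_of_lt_of_lt
      (Int.natCast_modEq_iff.1 (Int.modEq_iff_dvd.2 (by simpa using dvd_sub hdvd h)))
      (mem_range.1 ht) ht₀
    simp [diracComb, this]

lemma two_pow_mem_periodSet {k a : ℕ} (hk : 0 < k) (hka : k ≤ 2 ^ a) : 2 ^ a ∈ periodSet k := by
  obtain ⟨k, rfl⟩ := Nat.exists_eq_add_one.2 hk
  refine ⟨by positivity, psiZ^[2 ^ a - (k + 1)] (diracComb (2 ^ a)),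
    inX_succ_iff.2 ⟨0, two_pos, fun i _ => ?_⟩, periodic_iterate_psiZ (diracComb_periodic _) _⟩
  rw [← iterate_add_apply, show k + (2 ^ a - (k + 1)) = 2 ^ a - 1 by omega,
    iterate_psiZ_two_pow_sub_one]
  exact_mod_cast sum_range_diracComb (by positivity) _

lemma two_pow_succ_dvd_of_antiperiodic {u : ℤ → ZMod 2} {p b : ℕ} (hp : p ≠ 0)
    (hu : Periodic u p) (hanti : ∀ i, u (i + 2 ^ b) = u i + 1) : 2 ^ (b + 1) ∣ p := by
  have hmul : ∀ m : ℕ, u (2 ^ b * m) = u 0 + m := by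
    intro m
    induction m with
    | zero => simp
    | succ m ih => rw [Nat.cast_succ, mul_add_one, hanti, ih, Nat.cast_succ, add_assoc]
  obtain ⟨c, o, ho, rfl⟩ := Nat.exists_eq_two_pow_mul_odd hp
  by_contra h
  have hcb : c ≤ b := by
    by_contra hbc
    exact h (dvd_mul_of_dvd_left (pow_dvd_pow 2 (by omega)) o)
  have hmul_o : u (2 ^ b * o) = u 0 := by
    have := (hu.nat_mul (2 ^ (b - c))).eq
    rwa [show ((2 ^ (b - c) : ℕ) : ℤ) * ((2 ^ c * o : ℕ) : ℤ) = 2 ^ b * o by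
      push_cast; rw [← mul_assoc, ← pow_add, Nat.sub_add_cancel hcb]] at this
  rw [hmul, (ZMod.natCast_eq_one_iff_odd).2 ho] at hmul_o
  simp at hmul_o

lemma two_pow_succ_dvd_of_antiperiodic_even {u : ℤ → ZMod 2} {p b : ℕ} (hp : p ≠ 0)
    (hu : Periodic u p) (hanti : ∀ n : ℤ, u (2 * n + 2 ^ b) = u (2 * n) + 1) :
    2 ^ (b + 1) ∣ p := by
  rcases Nat.even_or_odd p with ⟨p, rfl⟩ | ⟨a, rfl⟩
  · cases b with
    | zero => exact ⟨p, by ring⟩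
    | succ b =>
      have hdec : 2 ^ (b + 1) ∣ p :=
        two_pow_succ_dvd_of_antiperiodic (u := fun n => u (2 * n)) (by omega)
          (fun n => by simpa [mul_add, ← two_mul] using hu (2 * n))
          (fun n => by simpa [mul_add, ← pow_succ'] using hanti n)
      rw [pow_succ, ← two_mul, mul_comm]
      exact mul_dvd_mul_left 2 hdec
  · -- for odd `p`, the period moves odd positions onto even ones
    have hanti' : ∀ i, u (i + 2 ^ b) = u i + 1 := by
      intro i
      obtain ⟨n, rfl | rfl⟩ := Int.even_or_odd' i
      · exact hanti n
      · have h := hanti (n + a + 1)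
        rwa [show 2 * (n + a + 1) = 2 * n + 1 + ((2 * a + 1 : ℕ) : ℤ) by push_cast; ring,
          add_right_comm, hu, hu] at h
    have := two_pow_succ_dvd_of_antiperiodic (by omega) hu hanti'
    exact absurd ((dvd_pow_self 2 b.succ_ne_zero).trans this) (by omega)

lemma two_pow_succ_dvd_of_mem_periodSet {k j q : ℕ} (hjk : 2 ^ j < k) (hq : q ∈ periodSet k) :
    2 ^ (j + 1) ∣ q := by
  obtain ⟨hq0, x, hx, hx_per⟩ := hq
  obtain ⟨k, rfl⟩ := Nat.exists_eq_add_one.2 (pos_of_gt hjk)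
  obtain ⟨r, -, hr⟩ := inX_succ_iff.1 hx
  refine two_pow_succ_dvd_of_antiperiodic_even (u := fun i => psiZ^[k - 2 ^ j] x (i + r))
    hq0.ne' ((periodic_iterate_psiZ hx_per _).add_const r) fun n => ?_
  have h := hr (2 * n) (even_two_mul n)
  rw [show k = 2 ^ j + (k - 2 ^ j) by omega, iterate_add_apply, iterate_psiZ_two_pow,
    add_comm, CharTwo.add_eq_iff_eq_add, add_right_comm] at h
  exact h.trans (add_comm _ _)

/-- T_seq(X_1) = 1, and T_seq(X_k) = 2^{j+1} when 2^j + 1 ≤ k ≤ 2^{j+1}. -/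
theorem stmt_15 :
    IsLeast (periodSet 1) 1 ∧
    ∀ k : ℕ, 2 ≤ k → ∀ j : ℕ, 2 ^ j + 1 ≤ k → k ≤ 2 ^ (j + 1) →
      IsLeast (periodSet k) (2 ^ (j + 1)) :=
  ⟨⟨two_pow_mem_periodSet (a := 0) one_pos le_rfl, fun _ hq => hq.1⟩,
    fun _ _ _ hjk hkj => ⟨two_pow_mem_periodSet (by omega) hkj,
      fun _ hq => Nat.le_of_dvd hq.1 (two_pow_succ_dvd_of_mem_periodSet hjk hq)⟩⟩
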